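/- Let k be a field and 𝒜 a finite-dimensional category such that every representable right 𝒜-module and every representable left 𝒜-module satisfies the descending chain condition on subobjects (i.e. Mod-𝒜 is Artinian). Then for an object V of Mod-𝒜 the following are equivalent: (a) V is finitely generated; (b) V is finitely cogenerated; (c) V has finite length. -/

import Mathlib

/-!
Subobjects of `V ∈ Mod-𝒜` are its subfunctors, i.e. families of subspaces `V(y)` stable under
the action of `𝒜`. They form a modular lattice, so a functor separated by finitely many maps
into Artinian (Noetherian) functors is itself Artinian (Noetherian).
A finitely generated module is a quotient of a finite sum of representables, hence Artinian.
In an Artinian lattice any family with infimum `0` has a finite subfamily with infimum `0`,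
so Artinian modules are finitely cogenerated. The evaluation maps `V → D Hom(x, −)`,
`v ↦ (g ↦ φ(v g))` for `φ ∈ V(x)*`, jointly separate `V`, so a finitely cogenerated `V` is
separated by finitely many of them; each `D Hom(x, −)` is Noetherian because `k`-duality
reverses the Artinian subfunctor lattice of `Hom(x, −)` when Hom-spaces are finite-dimensional,
so `V` is Noetherian. Finally a Noetherian module is the sum of finitely many cyclic
submodules, i.e. it is finitely generated.
-/

open CategoryTheory CategoryTheory.Limits Opposite

section
variable (k : Type) [Field k]

/-- `k`-linearity on the opposite category. -/
instance oppositeLinear (C : Type*) [Category C] [Preadditive C] [CategoryTheory.Linear k C] :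
    CategoryTheory.Linear k Cᵒᵖ where
  homModule X Y := Equiv.module k (opEquiv X Y)
  smul_comp _ _ _ _ _ _ :=
    Quiver.Hom.unop_inj (CategoryTheory.Linear.comp_smul _ _ _ _ _ _)
  comp_smul _ _ _ _ _ _ :=
    Quiver.Hom.unop_inj (CategoryTheory.Linear.smul_comp _ _ _ _ _ _)

@[simp] lemma unop_ksmul {C : Type*} [Category C] [Preadditive C]
    [CategoryTheory.Linear k C] {X Y : Cᵒᵖ} (r : k) (f : X ⟶ Y) :
    (r • f).unop = r • f.unop := rfl

/-- The property of a functor between `k`-linear categories being `k`-linear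
(in particular additive). -/
def IsKLinear {C D : Type*} [Category C] [Category D] [Preadditive C] [Preadditive D]
    [CategoryTheory.Linear k C] [CategoryTheory.Linear k D] (F : C ⥤ D) : Prop :=
  ∃ _h : F.Additive, Functor.Linear k F

/-- The category `Mod-A` of right modules over a small `k`-linear category `A`:
`k`-linear functors `Aᵒᵖ ⥤ ModuleCat k`. -/
abbrev RMod (A : Type) [SmallCategory A] [Preadditive A] [CategoryTheory.Linear k A] :=
  ObjectProperty.FullSubcategory (fun F : Aᵒᵖ ⥤ ModuleCat.{0} k => IsKLinear k F)

/-- The category `A-Mod` of left modules over a small `k`-linear category `A`: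
`k`-linear functors `A ⥤ ModuleCat k`. -/
abbrev LMod (A : Type) [SmallCategory A] [Preadditive A] [CategoryTheory.Linear k A] :=
  ObjectProperty.FullSubcategory (fun F : A ⥤ ModuleCat.{0} k => IsKLinear k F)

variable {k}

instance linYonObjLinear {C : Type*} [Category C] [Preadditive C] [CategoryTheory.Linear k C]
    (x : C) : ((linearYoneda k C).obj x).Linear k where
  map_smul f r := by
    ext (g : _ ⟶ x)
    exact CategoryTheory.Linear.smul_comp _ _ _ _ _ _

instance linCoyonObjLinear {C : Type*} [Category C] [Preadditive C] [CategoryTheory.Linear k C]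
    (x : Cᵒᵖ) : ((linearCoyoneda k C).obj x).Linear k where
  map_smul f r := by
    ext (g : x.unop ⟶ _)
    exact CategoryTheory.Linear.comp_smul _ _ _ _ _ _

variable (k)
variable (A : Type) [SmallCategory A] [Preadditive A] [CategoryTheory.Linear k A]

/-- The representable right `A`-module `Hom_A(−, x)`. -/
def reprR (x : A) : RMod k A :=
  ⟨(linearYoneda k A).obj x, inferInstance, inferInstance⟩

/-- The representable left `A`-module `Hom_A(x, −)`. -/
def reprL (x : A) : LMod k A :=
  ⟨(linearCoyoneda k A).obj (op x), inferInstance, inferInstance⟩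

/-- The underlying functor of a finite direct sum of representable right modules. -/
def sumReprRFunctor {n : ℕ} (x : Fin n → A) : Aᵒᵖ ⥤ ModuleCat.{0} k where
  obj y := ModuleCat.of k (∀ i, y.unop ⟶ x i)
  map {y z} f := ModuleCat.ofHom
    (LinearMap.pi fun i =>
      (CategoryTheory.Linear.leftComp k (x i) f.unop).comp (LinearMap.proj i))
  map_id y := by
    refine ModuleCat.hom_ext (LinearMap.ext fun g => ?_)
    funext i
    simp
  map_comp f g := by
    refine ModuleCat.hom_ext (LinearMap.ext fun h => ?_)
    funext i
    simp

instance sumReprRFunctor_additive {n : ℕ} (x : Fin n → A) :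
    (sumReprRFunctor k A x).Additive where
  map_add {y z f g} := by
    refine ModuleCat.hom_ext (LinearMap.ext fun h => ?_)
    funext i
    simp [sumReprRFunctor, Preadditive.add_comp]
    change (f.unop + g.unop) ≫ h i = f.unop ≫ h i + g.unop ≫ h i
    exact Preadditive.add_comp _ _ _ _ _ _

instance sumReprRFunctor_linear {n : ℕ} (x : Fin n → A) :
    (sumReprRFunctor k A x).Linear k where
  map_smul {y z} f r := by
    refine ModuleCat.hom_ext (LinearMap.ext fun h => ?_)
    funext i
    simp [sumReprRFunctor]
    change (r • f.unop) ≫ h i = r • (f.unop ≫ h i)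
    exact CategoryTheory.Linear.smul_comp _ _ _ _ _ _

/-- The finite direct sum of the representable right modules `Hom_A(−, x i)`. -/
def sumReprR {n : ℕ} (x : Fin n → A) : RMod k A :=
  ⟨sumReprRFunctor k A x, inferInstance, inferInstance⟩

/-- A right module is finitely generated if it admits an epimorphism from a finite
direct sum of representable modules. -/
def RMod.IsFG (V : RMod k A) : Prop :=
  ∃ (n : ℕ) (x : Fin n → A) (p : sumReprR k A x ⟶ V), Epi p

/-- A right module `V` is finitely cogenerated if every family of subobjects of `V`
with infimum `0` admits a finite subfamily with infimum `0`.  (A family of subobjects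
has infimum `0` precisely when the only subobject of `V` contained in all of its
members is the zero subobject, and a subobject `t : T ⟶ V` is the zero subobject
exactly when `t = 0`; here a subobject contained in a member `f j : D j ⟶ V` of the
family means a monomorphism into `V` factoring through `f j`.) -/
def RMod.IsFCog (V : RMod k A) : Prop :=
  ∀ (J : Type) (D : J → RMod k A) (f : ∀ j, D j ⟶ V), (∀ j, Mono (f j)) →
    (∀ (T : RMod k A) (t : T ⟶ V), Mono t → (∀ j, ∃ u : T ⟶ D j, u ≫ f j = t) → t = 0) →
    ∃ s : Finset J, ∀ (T : RMod k A) (t : T ⟶ V), Mono t →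
      (∀ j ∈ s, ∃ u : T ⟶ D j, u ≫ f j = t) → t = 0

section CompactnessOfWellFounded

variable {α ι : Type*} [CompleteLattice α]

lemma WellFoundedGT.exists_finset_iSup_eq [WellFoundedGT α] (f : ι → α) :
    ∃ s : Finset ι, ⨆ i ∈ s, f i = ⨆ i, f i :=
  have hcompact : IsCompactElement (⨆ i, f i) :=
    (CompleteLattice.isSupFiniteCompact_iff_all_elements_compact α).mp
      (CompleteLattice.WellFoundedGT.isSupFiniteCompact α) _
  let ⟨s, hs⟩ := CompleteLattice.IsCompactElement.exists_finset_of_le_iSup α hcompact f le_rfl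
  ⟨s, le_antisymm (iSup₂_le fun i _ => le_iSup f i) hs⟩

lemma WellFoundedLT.exists_finset_iInf_eq [WellFoundedLT α] (f : ι → α) :
    ∃ s : Finset ι, ⨅ i ∈ s, f i = ⨅ i, f i :=
  WellFoundedGT.exists_finset_iSup_eq (α := αᵒᵈ) f

end CompactnessOfWellFounded

section LinearSubfunctors

variable {k} {C : Type*} [Category C]

def subfunctorSublattice (F : C ⥤ ModuleCat.{0} k) :
    CompleteSublattice (∀ y, Submodule k (F.obj y)) :=
  .mk' {N | ∀ ⦃y z : C⦄ (f : y ⟶ z), N y ≤ (N z).comap (F.map f).hom}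
    (fun s hs y z f => by
      simp only [sSup_apply, iSup_le_iff]
      exact fun N => (hs N.2 f).trans (Submodule.comap_mono (le_iSup (fun N : s => N.1 z) N)))
    (fun s hs y z f => by
      simp only [sInf_apply, Submodule.comap_iInf, le_iInf_iff]
      exact fun N => (iInf_le (fun N : s => N.1 y) N).trans (hs N.2 f))

abbrev LinearSubfunctor (F : C ⥤ ModuleCat.{0} k) : Type _ := subfunctorSublattice F

namespace LinearSubfunctor

variable {F G : C ⥤ ModuleCat.{0} k}

lemma map_mem (S : LinearSubfunctor F) {y z : C} (f : y ⟶ z) {v : F.obj y} (hv : v ∈ S.1 y) :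
    F.map f v ∈ S.1 z :=
  S.2 f hv

lemma eq_bot_iff {S : LinearSubfunctor F} : S = ⊥ ↔ ∀ y, S.1 y = ⊥ := by
  rw [← Subtype.coe_inj, funext_iff]; rfl

instance : IsModularLattice (LinearSubfunctor F) where
  sup_inf_le_assoc_of_le _ _ h y := IsModularLattice.sup_inf_le_assoc_of_le _ (h y)

def range (η : F ⟶ G) : LinearSubfunctor G :=
  ⟨fun y => LinearMap.range (η.app y).hom, fun y z f => by
    rintro _ ⟨v, rfl⟩
    exact ⟨F.map f v, NatTrans.naturality_apply η f v⟩⟩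

def ker (η : F ⟶ G) : LinearSubfunctor F :=
  ⟨fun y => LinearMap.ker (η.app y).hom, fun y z f v (hv : η.app y v = 0) => by
    simp [LinearMap.mem_ker, hv]⟩

def map (η : F ⟶ G) (S : LinearSubfunctor F) : LinearSubfunctor G :=
  ⟨fun y => (S.1 y).map (η.app y).hom, fun y z f => by
    rintro _ ⟨v, hv, rfl⟩
    exact ⟨F.map f v, S.map_mem f hv, NatTrans.naturality_apply η f v⟩⟩

def comap (η : F ⟶ G) (T : LinearSubfunctor G) : LinearSubfunctor F :=
  ⟨fun y => (T.1 y).comap (η.app y).hom, fun y z f v (hv : η.app y v ∈ T.1 y) => by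
    simpa [Submodule.mem_comap, NatTrans.naturality_apply η f v] using T.map_mem f hv⟩

lemma comap_mono (η : F ⟶ G) : Monotone (comap η) :=
  fun _ _ h y => Submodule.comap_mono (h y)

lemma map_mono (η : F ⟶ G) : Monotone (map η) :=
  fun _ _ h y => Submodule.map_mono (h y)

lemma comap_map (η : F ⟶ G) (S : LinearSubfunctor F) : comap η (map η S) = S ⊔ ker η :=
  Subtype.ext <| funext fun _ => Submodule.comap_map_eq _ _

lemma strictMono_comap {η : F ⟶ G} (hη : ∀ y, Function.Surjective (η.app y)) :
    StrictMono (comap η) :=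
  (comap_mono η).strictMono_of_injective fun _ _ h => Subtype.ext <| funext fun y =>
    Submodule.comap_injective_of_surjective (hη y) (congrFun (congrArg Subtype.val h) y)

lemma strictMono_inf_ker_map (η : F ⟶ G) :
    StrictMono fun S : LinearSubfunctor F => (S ⊓ ker η, map η S) := by
  -- modular law: `S` is determined by `S ⊓ ker η` and `S ⊔ ker η = comap η (map η S)`
  intro S T hST
  have h := strictMono_inf_prod_sup (z := ker η) hST
  refine ⟨⟨h.1.1, map_mono η hST.le⟩, fun ⟨hinf, hmap⟩ => h.2 ⟨hinf, ?_⟩⟩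
  simpa only [comap_map] using comap_mono η hmap

lemma strictMono_Iic_inf_ker_map (η : F ⟶ G) (K : LinearSubfunctor F) :
    StrictMono fun S : Set.Iic K =>
      ((⟨S ⊓ ker η, Set.mem_Iic.mpr (inf_le_inf_right _ S.2)⟩ : Set.Iic (K ⊓ ker η)),
        map η S) :=
  fun _ _ h => strictMono_inf_ker_map η h

section Separating

variable {ι : Type*} {G : ι → C ⥤ ModuleCat.{0} k} (η : ∀ i, F ⟶ G i)

lemma wellFoundedLT_Iic_of_separating [∀ i, WellFoundedLT (LinearSubfunctor (G i))]
    (s : Finset ι) (K : LinearSubfunctor F) (hK : K ⊓ ⨅ i ∈ s, ker (η i) = ⊥) :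
    WellFoundedLT (Set.Iic K) := by
  classical
  induction s using Finset.induction_on generalizing K with
  | empty =>
    obtain rfl : K = ⊥ := by simpa using hK
    have : Subsingleton (Set.Iic (⊥ : LinearSubfunctor F)) := by
      rw [Set.Iic_bot]; infer_instance
    infer_instance
  | insert i s _ ih =>
    have := ih (K ⊓ ker (η i)) (by rwa [Finset.iInf_insert, ← inf_assoc] at hK)
    exact (strictMono_Iic_inf_ker_map (η i) K).wellFoundedLT

lemma wellFoundedGT_Iic_of_separating [∀ i, WellFoundedGT (LinearSubfunctor (G i))]
    (s : Finset ι) (K : LinearSubfunctor F) (hK : K ⊓ ⨅ i ∈ s, ker (η i) = ⊥) :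
    WellFoundedGT (Set.Iic K) := by
  classical
  induction s using Finset.induction_on generalizing K with
  | empty =>
    obtain rfl : K = ⊥ := by simpa using hK
    have : Subsingleton (Set.Iic (⊥ : LinearSubfunctor F)) := by
      rw [Set.Iic_bot]; infer_instance
    infer_instance
  | insert i s _ ih =>
    have := ih (K ⊓ ker (η i)) (by rwa [Finset.iInf_insert, ← inf_assoc] at hK)
    exact (strictMono_Iic_inf_ker_map (η i) K).wellFoundedGT

lemma iInf_ker_eq_bot_iff (s : Finset ι) : ⨅ i ∈ s, ker (η i) = ⊥ ↔
    ∀ y (v : F.obj y), (∀ i ∈ s, (η i).app y v = 0) → v = 0 := by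
  simp only [LinearSubfunctor.eq_bot_iff, CompleteSublattice.coe_iInf, iInf_apply,
    Submodule.eq_bot_iff, Submodule.mem_iInf]
  rfl

lemma wellFoundedLT_of_separating [∀ i, WellFoundedLT (LinearSubfunctor (G i))] (s : Finset ι)
    (hsep : ∀ y (v : F.obj y), (∀ i ∈ s, (η i).app y v = 0) → v = 0) :
    WellFoundedLT (LinearSubfunctor F) := by
  have := wellFoundedLT_Iic_of_separating η s ⊤ (by rwa [top_inf_eq, iInf_ker_eq_bot_iff])
  exact OrderIso.IicTop.symm.strictMono.wellFoundedLT

lemma wellFoundedGT_of_separating [∀ i, WellFoundedGT (LinearSubfunctor (G i))] (s : Finset ι)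
    (hsep : ∀ y (v : F.obj y), (∀ i ∈ s, (η i).app y v = 0) → v = 0) :
    WellFoundedGT (LinearSubfunctor F) := by
  have := wellFoundedGT_Iic_of_separating η s ⊤ (by rwa [top_inf_eq, iInf_ker_eq_bot_iff])
  exact OrderIso.IicTop.symm.strictMono.wellFoundedGT

end Separating

def toFunctor (S : LinearSubfunctor F) : C ⥤ ModuleCat.{0} k where
  obj y := ModuleCat.of k (S.1 y)
  map f := ModuleCat.ofHom ((F.map f).hom.restrict fun _ => S.map_mem f)
  map_id y := by ext ⟨v, _⟩; simp
  map_comp f g := by ext ⟨v, _⟩; simp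

def ι (S : LinearSubfunctor F) : S.toFunctor ⟶ F where
  app y := ModuleCat.ofHom (S.1 y).subtype

lemma range_ι (S : LinearSubfunctor F) : range S.ι = S :=
  Subtype.ext <| funext fun y => Submodule.range_subtype (S.1 y)

lemma isKLinear_toFunctor [Preadditive C] [CategoryTheory.Linear k C] (hF : IsKLinear k F)
    (S : LinearSubfunctor F) : IsKLinear k S.toFunctor := by
  obtain ⟨_, _⟩ := hF
  have : S.toFunctor.Additive := ⟨fun {_ _ f g} => by
    ext ⟨v, _⟩
    simp only [toFunctor, Functor.map_add, ModuleCat.hom_add, ConcreteCategory.hom_ofHom]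
    rfl⟩
  exact ⟨this, ⟨fun {_ _} f r => by
    ext ⟨v, _⟩
    simp only [toFunctor, Functor.map_smul, ModuleCat.hom_smul, ConcreteCategory.hom_ofHom]
    rfl⟩⟩

end LinearSubfunctor

end LinearSubfunctors

abbrev KLinearFunctors (C : Type*) [Category C] [Preadditive C] [CategoryTheory.Linear k C] :=
  ObjectProperty.FullSubcategory (fun F : C ⥤ ModuleCat.{0} k => IsKLinear k F)

namespace KLinearFunctors

open LinearSubfunctor

variable {k} {C : Type*} [Category C] [Preadditive C] [CategoryTheory.Linear k C]
  {T V W : KLinearFunctors k C}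

lemma hom_ext {f g : V ⟶ W} (h : ∀ y (v : V.obj.obj y), f.hom.app y v = g.hom.app y v) :
    f = g :=
  InducedCategory.hom_ext <| NatTrans.ext <| funext fun y =>
    ModuleCat.hom_ext <| LinearMap.ext (h y)

def ofSubfunctor (S : LinearSubfunctor V.obj) : KLinearFunctors k C :=
  ⟨S.toFunctor, isKLinear_toFunctor V.property S⟩

def ofSubfunctorι (S : LinearSubfunctor V.obj) : ofSubfunctor S ⟶ V :=
  ObjectProperty.homMk S.ι

lemma range_ofSubfunctorι (S : LinearSubfunctor V.obj) : range (ofSubfunctorι S).hom = S :=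
  range_ι S

lemma range_eq_bot_iff {t : T ⟶ V} : range t.hom = ⊥ ↔ t = 0 := by
  simp only [LinearSubfunctor.eq_bot_iff, range, LinearMap.range_eq_bot]
  exact ⟨fun h => hom_ext fun y v => LinearMap.congr_fun (h y) v,
    fun h y => by subst h; rfl⟩

lemma ofSubfunctorι_eq_zero_iff {S : LinearSubfunctor V.obj} :
    ofSubfunctorι S = 0 ↔ S = ⊥ := by
  rw [← range_eq_bot_iff, range_ofSubfunctorι]

lemma mono_of_injective {f : W ⟶ V} (hf : ∀ y, Function.Injective (f.hom.app y)) : Mono f :=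
  ⟨fun _ _ w => hom_ext fun y v => hf y (congrArg (fun q => q.hom.app y v) w)⟩

lemma epi_of_surjective {f : W ⟶ V} (hf : ∀ y, Function.Surjective (f.hom.app y)) : Epi f :=
  ⟨fun _ _ w => hom_ext fun y v => by
    obtain ⟨u, rfl⟩ := hf y v
    exact congrArg (fun q => q.hom.app y u) w⟩

instance (S : LinearSubfunctor V.obj) : Mono (ofSubfunctorι S) :=
  mono_of_injective fun _ => Subtype.val_injective

lemma injective_of_mono (f : W ⟶ V) [Mono f] (y : C) : Function.Injective (f.hom.app y) := by
  have hι : ofSubfunctorι (ker f.hom) = 0 := by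
    rw [← cancel_mono f, zero_comp]
    exact hom_ext fun z v => v.2
  have hker : ker f.hom = ⊥ := by
    rw [← range_ofSubfunctorι (ker f.hom), range_eq_bot_iff, hι]
  rw [← LinearMap.ker_eq_bot]
  exact LinearSubfunctor.eq_bot_iff.mp hker y

lemma range_le_of_comp {t : T ⟶ V} {u : T ⟶ W} {f : W ⟶ V} (w : u ≫ f = t) :
    range t.hom ≤ range f.hom := by
  rintro y _ ⟨v, rfl⟩
  exact ⟨u.hom.app y v, by rw [← w]; rfl⟩

lemma exists_comp_eq_of_range_le {f : W ⟶ V} (hf : ∀ y, Function.Injective (f.hom.app y))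
    {t : T ⟶ V} (h : range t.hom ≤ range f.hom) : ∃ u : T ⟶ W, u ≫ f = t := by
  choose u hu using fun y (v : T.obj.obj y) => h y ⟨v, rfl⟩
  refine ⟨ObjectProperty.homMk
    { app := fun y => ModuleCat.ofHom
        { toFun := u y
          map_add' := fun v v' => hf y (by simp [hu])
          map_smul' := fun r v => hf y (by simp [hu]) }
      naturality := fun y z g => ModuleCat.hom_ext <| LinearMap.ext fun v => hf z <| by
        simp [hu, NatTrans.naturality_apply] }, hom_ext fun y v => hu y v⟩

lemma mk_le_mk_of_range_le {f : T ⟶ V} {g : W ⟶ V} [Mono f] [Mono g]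
    (h : range f.hom ≤ range g.hom) : Subobject.mk f ≤ Subobject.mk g :=
  let ⟨u, hu⟩ := exists_comp_eq_of_range_le (injective_of_mono g) h
  Subobject.mk_le_mk_of_comm u hu

lemma range_arrow_mk (f : T ⟶ V) [Mono f] : range (Subobject.mk f).arrow.hom = range f.hom :=
  le_antisymm (range_le_of_comp (Subobject.underlyingIso_hom_comp_eq_mk f))
    (range_le_of_comp (by simp : (Subobject.underlyingIso f).inv ≫ (Subobject.mk f).arrow = f))

noncomputable def subobjectOrderIso (V : KLinearFunctors k C) :
    Subobject V ≃o LinearSubfunctor V.obj :=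
  Equiv.toOrderIso
    { toFun := fun P => range P.arrow.hom
      invFun := fun S => Subobject.mk (ofSubfunctorι S)
      left_inv := fun P => by
        have h := range_ofSubfunctorι (range P.arrow.hom)
        calc Subobject.mk (ofSubfunctorι (range P.arrow.hom)) = Subobject.mk P.arrow :=
              le_antisymm (mk_le_mk_of_range_le h.le) (mk_le_mk_of_range_le h.ge)
          _ = P := Subobject.mk_arrow P
      right_inv := fun S => by simp only [range_arrow_mk, range_ofSubfunctorι] }
    (fun _ _ h => range_le_of_comp (Subobject.ofLE_arrow h))
    (fun S T h => mk_le_mk_of_range_le (by simpa only [range_ofSubfunctorι] using h))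

end KLinearFunctors

section Duality

variable {k} {C : Type*} [Category C]

def dualFunctor (F : C ⥤ ModuleCat.{0} k) : Cᵒᵖ ⥤ ModuleCat.{0} k where
  obj y := ModuleCat.of k (Module.Dual k (F.obj y.unop))
  map f := ModuleCat.ofHom (F.map f.unop).hom.dualMap
  map_id y := by ext; simp
  map_comp f g := by ext; simp

variable {F : C ⥤ ModuleCat.{0} k}

lemma isKLinear_dualFunctor [Preadditive C] [CategoryTheory.Linear k C] (hF : IsKLinear k F) :
    IsKLinear k (dualFunctor F) := by
  obtain ⟨_, _⟩ := hF
  have : (dualFunctor F).Additive := ⟨fun {x _ f g} => ModuleCat.hom_ext <|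
    LinearMap.ext fun (ψ : Module.Dual k (F.obj x.unop)) => LinearMap.ext fun v => by
      change ψ (F.map (f + g).unop v) = ψ (F.map f.unop v) + ψ (F.map g.unop v)
      simp⟩
  exact ⟨this, ⟨fun {x _} f r => ModuleCat.hom_ext <|
    LinearMap.ext fun (ψ : Module.Dual k (F.obj x.unop)) => LinearMap.ext fun v => by
      change ψ (F.map (r • f).unop v) = r • ψ (F.map f.unop v)
      simp⟩⟩

def dualCoannihilator (U : LinearSubfunctor (dualFunctor F)) : LinearSubfunctor F :=
  ⟨fun y => (U.1 (op y)).dualCoannihilator, fun _ _ f _ hv =>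
    (Submodule.mem_dualCoannihilator _).mpr fun _ hψ =>
      (Submodule.mem_dualCoannihilator _).mp hv _ (U.map_mem f.op hψ)⟩

lemma strictAnti_dualCoannihilator [∀ y, FiniteDimensional k (F.obj y)] :
    StrictAnti (dualCoannihilator (F := F)) := by
  refine Antitone.strictAnti_of_injective
    (fun U U' h y => Submodule.dualCoannihilator_anti (h (op y))) fun U U' h => ?_
  refine Subtype.ext <| funext fun y => ?_
  have key (W : Subspace k (Module.Dual k (F.obj y.unop))) :
      W.dualCoannihilator.dualAnnihilator = W :=
    Subspace.dualCoannihilator_dualAnnihilator_eq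
  rw [← key (U.1 y), ← key (U'.1 y)]
  exact congrArg Submodule.dualAnnihilator (congrFun (congrArg Subtype.val h) y.unop)

lemma wellFoundedGT_dualFunctor [∀ y, FiniteDimensional k (F.obj y)]
    [WellFoundedLT (LinearSubfunctor F)] : WellFoundedGT (LinearSubfunctor (dualFunctor F)) :=
  strictAnti_dualCoannihilator.wellFoundedGT

end Duality

section RightModules

open LinearSubfunctor KLinearFunctors

variable {k} {A}

def RMod.orbit (V : RMod k A) {y : Aᵒᵖ} (v : V.obj.obj y) (z : A) :
    (z ⟶ y.unop) →ₗ[k] V.obj.obj (op z) where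
  toFun g := V.obj.map g.op v
  map_add' g g' := by obtain ⟨_, _⟩ := V.property; simp
  map_smul' r g := by
    obtain ⟨_, _⟩ := V.property
    simp [show (r • g).op = r • g.op from rfl]

def RMod.yonedaHom (V : RMod k A) {y : Aᵒᵖ} (v : V.obj.obj y) :
    (reprR k A y.unop).obj ⟶ V.obj where
  app z := ModuleCat.ofHom (V.orbit v z.unop)
  naturality z w f := by
    ext (g : z.unop ⟶ y.unop)
    change V.obj.map (f.unop ≫ g).op v = V.obj.map f (V.obj.map g.op v)
    simp

def dualRep (x : A) : RMod k A :=
  ⟨dualFunctor (reprL k A x).obj, isKLinear_dualFunctor (reprL k A x).property⟩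

def RMod.evalHom (V : RMod k A) {x : A} (φ : Module.Dual k (V.obj.obj (op x))) :
    V ⟶ dualRep x :=
  ObjectProperty.homMk
    { app y := ModuleCat.ofHom
        { toFun v := φ ∘ₗ V.orbit v x
          map_add' v w := LinearMap.ext fun (g : x ⟶ y.unop) => by
            obtain ⟨_, _⟩ := V.property
            change φ (V.obj.map g.op (v + w)) = φ (V.obj.map g.op v) + φ (V.obj.map g.op w)
            simp
          map_smul' r v := LinearMap.ext fun (g : x ⟶ y.unop) => by
            obtain ⟨_, _⟩ := V.property
            change φ (V.obj.map g.op (r • v)) = r • φ (V.obj.map g.op v)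
            simp }
      naturality y z f := by
        refine ModuleCat.hom_ext <| LinearMap.ext fun v =>
          LinearMap.ext fun (g : x ⟶ z.unop) => ?_
        change φ (V.obj.map g.op (V.obj.map f v)) = φ (V.obj.map (g ≫ f.unop).op v)
        simp }

lemma RMod.evalHom_app_id (V : RMod k A) {x : A} (φ : Module.Dual k (V.obj.obj (op x)))
    (v : V.obj.obj (op x)) :
    (show Module.Dual k (x ⟶ x) from (V.evalHom φ).hom.app (op x) v) (𝟙 x) = φ v := by
  change φ (V.obj.map (𝟙 x).op v) = φ v
  simp

lemma RMod.eq_zero_of_evalHom_eq_zero (V : RMod k A) {y : Aᵒᵖ} (v : V.obj.obj y)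
    (h : ∀ φ : Module.Dual k (V.obj.obj (op y.unop)), (V.evalHom φ).hom.app y v = 0) :
    v = 0 := by
  obtain ⟨_, _⟩ := V.property
  refine (Module.forall_dual_apply_eq_zero_iff k v).mp fun φ => ?_
  rw [← V.evalHom_app_id φ v, h φ]
  rfl

lemma RMod.surjective_of_epi {V W : RMod k A} (p : W ⟶ V) [Epi p] (y : Aᵒᵖ) :
    Function.Surjective (p.hom.app y) := by
  -- a functional `φ` vanishing on the image of `p` but not at `v` gives `p ≫ V.evalHom φ = 0`
  -- with `V.evalHom φ ≠ 0`
  intro v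
  by_contra hv
  obtain ⟨φ, hφv, hφ⟩ := Submodule.exists_dual_map_eq_bot_of_notMem
    (p := LinearMap.range (p.hom.app y).hom) (fun ⟨w, hw⟩ => hv ⟨w, hw⟩) inferInstance
  have hp : p ≫ V.evalHom (x := y.unop) φ = 0 := by
    refine hom_ext fun z w => LinearMap.ext fun (g : y.unop ⟶ z.unop) => ?_
    change φ (V.obj.map g.op (p.hom.app z w)) = 0
    rw [← NatTrans.naturality_apply]
    have := Submodule.mem_map_of_mem (f := φ) (LinearMap.mem_range_self (p.hom.app y).hom
      (W.obj.map g.op w))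
    rwa [hφ, Submodule.mem_bot] at this
  rw [← comp_zero, cancel_epi] at hp
  exact hφv (by rw [← V.evalHom_app_id φ v, hp]; rfl)

def sumReprRProj {n : ℕ} (x : Fin n → A) (i : Fin n) :
    sumReprRFunctor k A x ⟶ (reprR k A (x i)).obj where
  app y := ModuleCat.ofHom (LinearMap.proj i)

lemma RMod.wellFoundedLT_of_isFG (hdccR : ∀ x : A, WellFoundedLT (Subobject (reprR k A x)))
    {V : RMod k A} (hV : RMod.IsFG k A V) : WellFoundedLT (LinearSubfunctor V.obj) := by
  obtain ⟨n, x, p, _⟩ := hV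
  have (i : Fin n) : WellFoundedLT (LinearSubfunctor (reprR k A (x i)).obj) :=
    have := hdccR (x i); (subobjectOrderIso _).symm.strictMono.wellFoundedLT
  have : WellFoundedLT (LinearSubfunctor (sumReprR k A x).obj) :=
    wellFoundedLT_of_separating (sumReprRProj x) Finset.univ fun _ _ hv =>
      funext fun i => hv i (Finset.mem_univ i)
  exact (strictMono_comap (RMod.surjective_of_epi p)).wellFoundedLT

lemma RMod.isFCog_of_wellFoundedLT {V : RMod k A} [WellFoundedLT (LinearSubfunctor V.obj)] :
    RMod.IsFCog k A V := by
  intro J D f hf hzero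
  have hfactor (M : LinearSubfunctor V.obj) (j : J) (hM : M ≤ range (f j).hom) :
      ∃ u, u ≫ f j = ofSubfunctorι M :=
    have := hf j
    exists_comp_eq_of_range_le (injective_of_mono (f j)) (by rwa [range_ofSubfunctorι])
  have hinf : ⨅ j, range (f j).hom = ⊥ := ofSubfunctorι_eq_zero_iff.mp <|
    hzero _ _ inferInstance fun j => hfactor _ j (iInf_le _ j)
  obtain ⟨s, hs⟩ := WellFoundedLT.exists_finset_iInf_eq fun j => range (f j).hom
  refine ⟨s, fun T t _ ht => range_eq_bot_iff.mp (le_bot_iff.mp ?_)⟩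
  calc range t.hom ≤ ⨅ j ∈ s, range (f j).hom :=
        le_iInf₂ fun j hj => range_le_of_comp (ht j hj).choose_spec
    _ = ⊥ := hs.trans hinf

lemma wellFoundedGT_dualRep (hfd : ∀ x y : A, FiniteDimensional k (x ⟶ y))
    (hdccL : ∀ x : A, WellFoundedLT (Subobject (reprL k A x))) (x : A) :
    WellFoundedGT (LinearSubfunctor (dualRep (k := k) x).obj) :=
  have (y : A) : FiniteDimensional k ((reprL k A x).obj.obj y) := hfd x y
  have := hdccL x
  have : WellFoundedLT (LinearSubfunctor (reprL k A x).obj) :=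
    (subobjectOrderIso _).symm.strictMono.wellFoundedLT
  wellFoundedGT_dualFunctor

lemma RMod.wellFoundedGT_of_isFCog (hfd : ∀ x y : A, FiniteDimensional k (x ⟶ y))
    (hdccL : ∀ x : A, WellFoundedLT (Subobject (reprL k A x)))
    {V : RMod k A} (hV : RMod.IsFCog k A V) : WellFoundedGT (LinearSubfunctor V.obj) := by
  let η (j : Σ x : A, Module.Dual k (V.obj.obj (op x))) := (V.evalHom j.2).hom
  have hsep (y : Aᵒᵖ) (v : V.obj.obj y) (hv : ∀ j, (η j).app y v = 0) : v = 0 :=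
    V.eq_zero_of_evalHom_eq_zero v fun φ => hv ⟨y.unop, φ⟩
  obtain ⟨s, hs⟩ := hV _ (fun j => ofSubfunctor (ker (η j))) (fun j => ofSubfunctorι _)
    (fun _ => inferInstance) fun T t _ ht => hom_ext fun y v => hsep y _ fun j => by
      obtain ⟨u, rfl⟩ := ht j
      exact (u.hom.app y v).2
  have hinf : ⨅ j ∈ s, ker (η j) = ⊥ := by
    refine ofSubfunctorι_eq_zero_iff.mp (hs _ _ inferInstance fun j hj => ?_)
    refine exists_comp_eq_of_range_le (injective_of_mono _) ?_
    simpa only [range_ofSubfunctorι] using iInf₂_le j hj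
  have (j : Σ x : A, Module.Dual k (V.obj.obj (op x))) := wellFoundedGT_dualRep hfd hdccL j.1
  exact wellFoundedGT_of_separating η s ((iInf_ker_eq_bot_iff η s).mp hinf)

def RMod.cyclic (V : RMod k A) {y : Aᵒᵖ} (v : V.obj.obj y) : LinearSubfunctor V.obj :=
  range (V.yonedaHom v)

lemma RMod.iSup_cyclic (V : RMod k A) : ⨆ p : Σ y, V.obj.obj y, V.cyclic p.2 = ⊤ := by
  refine eq_top_iff.mpr fun y v _ =>
    le_iSup (fun p : Σ y, V.obj.obj y => V.cyclic p.2) ⟨y, v⟩ y ?_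
  exact ⟨𝟙 y.unop, show V.obj.map (𝟙 y.unop).op v = v by simp⟩

lemma RMod.isFG_of_finset_iSup_cyclic_eq_top (V : RMod k A) (s : Finset (Σ y, V.obj.obj y))
    (hs : ⨆ p ∈ s, V.cyclic p.2 = ⊤) : RMod.IsFG k A V := by
  let e := s.equivFin.symm
  let x (i : Fin s.card) : A := (e i).1.1.unop
  let p := ∑ i, sumReprRProj x i ≫ V.yonedaHom (e i).1.2
  refine ⟨s.card, x, ObjectProperty.homMk p, epi_of_surjective fun y w => ?_⟩
  have hw : w ∈ (⨆ p ∈ s, V.cyclic p.2).1 y := hs ▸ trivial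
  simp only [CompleteSublattice.coe_iSup, iSup_apply] at hw
  obtain ⟨μ, hμ⟩ := (Submodule.mem_iSup_finset_iff_exists_sum _ w).mp hw
  choose g hg using fun q => (μ q).2
  refine ⟨fun i => g (e i).1, ?_⟩
  calc p.app y (fun i => g (e i).1)
      = ∑ i, (μ (e i).1 : V.obj.obj y) := by
        simp only [p, NatTrans.app_sum, ModuleCat.hom_sum, ← hg]
        exact LinearMap.sum_apply _ _ _
    _ = ∑ q ∈ s, (μ q : V.obj.obj y) := by
        rw [← Finset.sum_coe_sort s]
        exact e.sum_comp fun q => (μ q.1 : V.obj.obj y)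
    _ = w := hμ

lemma RMod.isFG_of_wellFoundedGT {V : RMod k A} [WellFoundedGT (LinearSubfunctor V.obj)] :
    RMod.IsFG k A V :=
  let ⟨s, hs⟩ := WellFoundedGT.exists_finset_iSup_eq fun p : Σ y, V.obj.obj y => V.cyclic p.2
  V.isFG_of_finset_iSup_cyclic_eq_top s (hs.trans V.iSup_cyclic)

end RightModules

theorem statement_12
    (hfd : ∀ x y : A, FiniteDimensional k (x ⟶ y))
    (hdccR : ∀ x : A, WellFoundedLT (Subobject (reprR k A x)))
    (hdccL : ∀ x : A, WellFoundedLT (Subobject (reprL k A x)))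
    (V : RMod k A) :
    (RMod.IsFG k A V ↔ RMod.IsFCog k A V) ∧
    (RMod.IsFG k A V ↔
      (WellFoundedLT (Subobject V) ∧ WellFoundedGT (Subobject V))) := by
  let e := KLinearFunctors.subobjectOrderIso V
  have artinian_iff : WellFoundedLT (Subobject V) ↔ WellFoundedLT (LinearSubfunctor V.obj) :=
    ⟨fun _ => e.symm.strictMono.wellFoundedLT, fun _ => e.strictMono.wellFoundedLT⟩
  have noetherian_iff : WellFoundedGT (Subobject V) ↔ WellFoundedGT (LinearSubfunctor V.obj) :=
    ⟨fun _ => e.symm.strictMono.wellFoundedGT, fun _ => e.strictMono.wellFoundedGT⟩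
  have fg_artinian := RMod.wellFoundedLT_of_isFG hdccR (V := V)
  have artinian_fcog (_ : WellFoundedLT (LinearSubfunctor V.obj)) : RMod.IsFCog k A V :=
    RMod.isFCog_of_wellFoundedLT
  have fcog_noetherian := RMod.wellFoundedGT_of_isFCog hfd hdccL (V := V)
  have noetherian_fg (_ : WellFoundedGT (LinearSubfunctor V.obj)) : RMod.IsFG k A V :=
    RMod.isFG_of_wellFoundedGT
  rw [artinian_iff, noetherian_iff]
  exact ⟨⟨fun h => artinian_fcog (fg_artinian h), fun h => noetherian_fg (fcog_noetherian h)⟩,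
    fun h => ⟨fg_artinian h, fcog_noetherian (artinian_fcog (fg_artinian h))⟩,
    fun h => noetherian_fg h.2⟩
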